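/- For every J ⊆ {1,…,n}, every y ∈ W, and every collection of integers {n_β : β ∈ Φ⁺ ∖ Φ_J⁺}, the (J,y)-sector S_{J,y}({n_β}) contains at least one alcove; moreover, if it contains more than one alcove, then it contains infinitely many alcoves. -/

import Mathlib

open scoped RealInnerProductSpace
open scoped Classical

noncomputable section

/-- The ambient Euclidean space `V = ℝⁿ`. -/
abbrev V (n : ℕ) : Type := EuclideanSpace ℝ (Fin n)

/-- The data of an irreducible crystallographic (reduced) root system in `ℝⁿ`,
together with a choice of positive roots, simple roots and highest root. -/
structure RootData (n : ℕ) where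
  Φ : Set (V n)
  pos : Set (V n)
  simple : Fin n → V n
  highest : V n
  finite : Φ.Finite
  nonzero : ∀ α ∈ Φ, α ≠ 0
  neg_mem : ∀ α ∈ Φ, -α ∈ Φ
  span_top : Submodule.span ℝ Φ = ⊤
  reflect_mem : ∀ α ∈ Φ, ∀ β ∈ Φ, β - (2 * ⟪α, β⟫ / ⟪α, α⟫) • α ∈ Φ
  crystallographic : ∀ α ∈ Φ, ∀ β ∈ Φ, ∃ m : ℤ, 2 * ⟪α, β⟫ / ⟪α, α⟫ = (m : ℝ)
  reduced : ∀ α ∈ Φ, ∀ c : ℝ, c • α ∈ Φ → c = 1 ∨ c = -1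
  pos_sub : pos ⊆ Φ
  pos_total : ∀ α ∈ Φ, α ∈ pos ∨ -α ∈ pos
  pos_not_neg : ∀ α ∈ pos, -α ∉ pos
  simple_mem : ∀ i, simple i ∈ pos
  simple_indep : LinearIndependent ℝ simple
  pos_combo : ∀ α ∈ pos, ∃ c : Fin n → ℝ, (∀ i, 0 ≤ c i) ∧ α = ∑ i, c i • simple i
  highest_mem : highest ∈ pos
  highest_dominates : ∀ α ∈ pos, ∃ c : Fin n → ℝ, (∀ i, 0 ≤ c i) ∧
    highest - α = ∑ i, c i • simple i
  irreducible : ∀ A B : Set (Fin n), A ∪ B = Set.univ → A ∩ B = ∅ →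
    (∀ i ∈ A, ∀ j ∈ B, ⟪simple i, simple j⟫ = 0) → A = ∅ ∨ B = ∅

variable {n : ℕ}

/-- The coroot `α^∨ = 2α/⟨α,α⟩`. -/
def coroot (α : V n) : V n := (2 / ⟪α, α⟫) • α

/-- The affine hyperplane `H_{α,k} = {v : ⟨α,v⟩ = k}`. -/
def Hy (α : V n) (k : ℝ) : Set (V n) := {v | ⟪α, v⟫ = k}

/-- The closed half-space `{v : ⟨α,v⟩ ≥ k}`. -/
def Hge (α : V n) (k : ℝ) : Set (V n) := {v | k ≤ ⟪α, v⟫}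

/-- The closed half-space `{v : ⟨α,v⟩ ≤ k}`. -/
def Hle (α : V n) (k : ℝ) : Set (V n) := {v | ⟪α, v⟫ ≤ k}

/-- The affine reflection `s_{α,k}` fixing `H_{α,k}` pointwise. -/
def sRefl (α : V n) (k : ℝ) : V n → V n := fun v => v - (⟪α, v⟫ - k) • coroot α

/-- The coroot lattice `R^∨ = ⊕ᵢ ℤ αᵢ^∨`. -/
def corootLattice (D : RootData n) : Set (V n) :=
  {μ | ∃ c : Fin n → ℤ, μ = ∑ i, (c i : ℝ) • coroot (D.simple i)}

/-- The affine Weyl group `W`, as the group of permutations of `V` generated by all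
affine reflections `s_{α,k}` with `α ∈ Φ`, `k ∈ ℤ`. -/
def AffW (D : RootData n) : Subgroup (Equiv.Perm (V n)) :=
  Subgroup.closure {e : Equiv.Perm (V n) | ∃ α ∈ D.Φ, ∃ k : ℤ, ⇑e = sRefl α (k : ℝ)}

/-- The finite Weyl group `W₀`, generated by the linear reflections `s_{α,0}`. -/
def FinW (D : RootData n) : Subgroup (Equiv.Perm (V n)) :=
  Subgroup.closure {e : Equiv.Perm (V n) | ∃ α ∈ D.Φ, ⇑e = sRefl α 0}

/-- The Coxeter generating set `S = {s₀, s₁, …, sₙ}` of the affine Weyl group. -/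
def SGen (D : RootData n) : Set (AffW D) :=
  {s | ⇑(s : Equiv.Perm (V n)) = sRefl D.highest 1 ∨
       ∃ i : Fin n, ⇑(s : Equiv.Perm (V n)) = sRefl (D.simple i) 0}

/-- The Coxeter length of `y ∈ W` with respect to `S`. -/
def lenW (D : RootData n) (y : AffW D) : ℕ :=
  sInf {m | ∃ l : List (AffW D), (∀ s ∈ l, s ∈ SGen D) ∧ l.length = m ∧ l.prod = y}

/-- The fundamental alcove `𝐚_f`. -/
def fund (D : RootData n) : Set (V n) :=
  {v | (∀ i, 0 ≤ ⟪D.simple i, v⟫) ∧ ⟪D.highest, v⟫ ≤ 1}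

/-- The union of all the hyperplanes `H_{α,k}`. -/
def wallUnion (D : RootData n) : Set (V n) := ⋃ α ∈ D.Φ, ⋃ k : ℤ, Hy α (k : ℝ)

/-- An alcove: the closure of a connected component of the complement of all walls. -/
def IsAlcove (D : RootData n) (c : Set (V n)) : Prop :=
  ∃ v ∈ (wallUnion D)ᶜ, c = closure (connectedComponentIn (wallUnion D)ᶜ v)

/-- A (closed) face of the Coxeter complex: the closure of an equivalence class of points
having the same position relative to every hyperplane of the arrangement. -/
def IsFace (D : RootData n) (F : Set (V n)) : Prop :=
  ∃ v : V n, F = closure {w | ∀ α ∈ D.Φ, ∀ k : ℤ,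
    (⟪α, w⟫ = (k : ℝ) ↔ ⟪α, v⟫ = (k : ℝ)) ∧ (⟪α, w⟫ < (k : ℝ) ↔ ⟪α, v⟫ < (k : ℝ))}

/-- The set of all hyperplanes of the affine arrangement, as subsets of `V`. -/
def hyperplanes (D : RootData n) : Set (Set (V n)) :=
  {H | ∃ α ∈ D.Φ, ∃ k : ℤ, H = Hy α (k : ℝ)}

/-- `p` is a panel (codimension-one face) of the alcove `c`: it is the intersection of `c`
with a wall, and it lies in exactly one hyperplane (its supporting hyperplane). -/
def IsPanelOf (D : RootData n) (p c : Set (V n)) : Prop :=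
  IsAlcove D c ∧ IsFace D p ∧ (∃ H ∈ hyperplanes D, p = c ∩ H) ∧
    ∃! H, H ∈ hyperplanes D ∧ p ⊆ H

/-- The action of an element of the affine Weyl group on subsets of `V`. -/
def actW {D : RootData n} (x : AffW D) (A : Set (V n)) : Set (V n) :=
  ⇑(x : Equiv.Perm (V n)) '' A

/-- The data of a finite combinatorial gallery `(p₀, c₀, p₁, …, p_l, c_l, p_{l+1})`:
`len = l`, alcoves `c 0, …, c len` and faces `p 0, …, p (len+1)`. -/
structure PreGallery (n : ℕ) where
  len : ℕ
  p : ℕ → Set (V n)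
  c : ℕ → Set (V n)

/-- The gallery conditions for the data of a combinatorial gallery. -/
def IsGallery (D : RootData n) (γ : PreGallery n) : Prop :=
  (∀ i ≤ γ.len, IsAlcove D (γ.c i)) ∧
  (IsFace D (γ.p 0) ∧ γ.p 0 ⊆ γ.c 0) ∧
  (IsFace D (γ.p (γ.len + 1)) ∧ γ.p (γ.len + 1) ⊆ γ.c γ.len) ∧
  ∀ i, 1 ≤ i → i ≤ γ.len → IsPanelOf D (γ.p i) (γ.c (i - 1)) ∧ IsPanelOf D (γ.p i) (γ.c i)

/-- A gallery is positively folded with respect to an orientation `φ` if whenever it has a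
fold at `pᵢ` (i.e. `c_{i-1} = c_i`), `φ(cᵢ, pᵢ) = +`. -/
def PositivelyFolded (φ : Set (V n) → Set (V n) → Prop) (γ : PreGallery n) : Prop :=
  ∀ i, 1 ≤ i → i ≤ γ.len → γ.c (i - 1) = γ.c i → φ (γ.c i) (γ.p i)

/-- `X` and `Y` lie in a common closed half-space bounded by `H_{α,k}`. -/
def sameSide (α : V n) (k : ℝ) (X Y : Set (V n)) : Prop :=
  (X ⊆ Hge α k ∧ Y ⊆ Hge α k) ∨ (X ⊆ Hle α k ∧ Y ⊆ Hle α k)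

/-- The hyperplane `H_{α,k}` separates `X` from `Y` (they lie in opposite closed
half-spaces). -/
def Separates (α : V n) (k : ℝ) (X Y : Set (V n)) : Prop :=
  (X ⊆ Hge α k ∧ Y ⊆ Hle α k) ∨ (X ⊆ Hle α k ∧ Y ⊆ Hge α k)

/-- The orientation induced by an alcove `A`: `φ(c,p) = +` iff the closed half-space bounded
by the supporting hyperplane of `p` which contains `c` does not contain `A`. -/
def alcoveOrient (D : RootData n) (A : Set (V n)) : Set (V n) → Set (V n) → Prop :=
  fun c p => ∀ α ∈ D.Φ, ∀ k : ℤ, p ⊆ Hy α (k : ℝ) → ¬ sameSide α (k : ℝ) c A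

/-- Two faces have the same type iff they lie in the same orbit of the affine Weyl group. -/
def SameTypeFace (D : RootData n) (σ σ' : Set (V n)) : Prop :=
  ∃ x : Equiv.Perm (V n), x ∈ AffW D ∧ σ' = ⇑x '' σ

/-- Two galleries have the same type iff they have the same length and corresponding
faces (first face, panels, last face) have the same types. -/
def SameTypeGallery (D : RootData n) (γ γ' : PreGallery n) : Prop :=
  γ.len = γ'.len ∧ ∀ i ≤ γ.len + 1, SameTypeFace D (γ.p i) (γ'.p i)

/-- A gallery is minimal if it has minimal length among all galleries with the same first
and last faces. -/
def IsMinimal (D : RootData n) (γ : PreGallery n) : Prop :=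
  IsGallery D γ ∧ ∀ γ' : PreGallery n, IsGallery D γ' → γ'.p 0 = γ.p 0 →
    γ'.p (γ'.len + 1) = γ.p (γ.len + 1) → γ.len ≤ γ'.len

/-- The shadow with respect to the orientation `φ`, relative to a fixed (minimal) gallery
`γ`: the set of final simplices of all galleries of the same type as `γ`, with the same
first face, which are positively folded with respect to `φ`. -/
def Shadow (D : RootData n) (φ : Set (V n) → Set (V n) → Prop) (γ : PreGallery n) :
    Set (Set (V n)) :=
  {ζ | ∃ γ' : PreGallery n, IsGallery D γ' ∧ SameTypeGallery D γ γ' ∧ γ'.p 0 = γ.p 0 ∧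
    PositivelyFolded φ γ' ∧ ζ = γ'.p (γ'.len + 1)}

/-- The vertex version of the shadow: the set of points `μ` whose corresponding vertex
(the singleton face `{μ}`) is a final simplex of a positively folded gallery of the
appropriate type. -/
def VShadow (D : RootData n) (φ : Set (V n) → Set (V n) → Prop) (γ : PreGallery n) :
    Set (V n) :=
  {μ | ({μ} : Set (V n)) ∈ Shadow D φ γ}

/-- The orbit `W₀ · λ` of a point under the finite Weyl group. -/
def W0orbit (D : RootData n) (lam : V n) : Set (V n) :=
  {v | ∃ w ∈ FinW D, v = w lam}

/-- The closed half-space bounded by `H_{α,k}` which contains the fundamental alcove. -/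
def HalfId (D : RootData n) (α : V n) (k : ℝ) : Set (V n) :=
  if fund D ⊆ Hge α k then Hge α k else Hle α k

/-- `[j,m]` is a (finite) `H_{α,k}`-protrusion of `γ`. -/
def IsProtrusionFin (D : RootData n) (γ : PreGallery n) (α : V n) (k : ℝ) (j m : ℕ) : Prop :=
  j < m ∧ m ≤ γ.len + 1 ∧ γ.p j ⊆ Hy α k ∧ γ.p m ⊆ Hy α k ∧
    ∀ i, j ≤ i → i < m → ¬ γ.c i ⊆ HalfId D α k

/-- `[j,∞)` is an (infinite) `H_{α,k}`-protrusion of `γ`. -/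
def IsProtrusionInf (D : RootData n) (γ : PreGallery n) (α : V n) (k : ℝ) (j : ℕ) : Prop :=
  j ≤ γ.len + 1 ∧ γ.p j ⊆ Hy α k ∧ ∀ i, j ≤ i → i ≤ γ.len → ¬ γ.c i ⊆ HalfId D α k

/-- The set of indices reflected by the maximal `H`-outcrop: the union of (the index sets
of) all `H`-protrusions. -/
def maxOutcrop (D : RootData n) (γ : PreGallery n) (α : V n) (k : ℝ) : Set ℕ :=
  {i | (∃ j m, IsProtrusionFin D γ α k j m ∧ j ≤ i ∧ i < m) ∨
       (∃ j, IsProtrusionInf D γ α k j ∧ j ≤ i)}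

/-- `[j,m]` is a (finite) `H_{α,k}`-indentation of `γ`. -/
def IsIndentationFin (D : RootData n) (γ : PreGallery n) (α : V n) (k : ℝ) (j m : ℕ) : Prop :=
  1 ≤ j ∧ j < m ∧ m ≤ γ.len + 1 ∧ γ.p j ⊆ Hy α k ∧ γ.p m ⊆ Hy α k ∧
    ∀ i, j ≤ i → i < m → γ.c i ⊆ HalfId D α k

/-- `[j,∞)` is an (infinite) `H_{α,k}`-indentation of `γ`. -/
def IsIndentationInf (D : RootData n) (γ : PreGallery n) (α : V n) (k : ℝ) (j : ℕ) : Prop :=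
  1 ≤ j ∧ j ≤ γ.len + 1 ∧ γ.p j ⊆ Hy α k ∧ ∀ i, j ≤ i → i ≤ γ.len → γ.c i ⊆ HalfId D α k

/-- The set of indices reflected by the maximal `H`-ingrowth: the union of (the index sets
of) all `H`-indentations. -/
def maxIngrowth (D : RootData n) (γ : PreGallery n) (α : V n) (k : ℝ) : Set ℕ :=
  {i | (∃ j m, IsIndentationFin D γ α k j m ∧ j ≤ i ∧ i < m) ∨
       (∃ j, IsIndentationInf D γ α k j ∧ j ≤ i)}

/-- The operators `e_H^L` and `f_H^L`: reflect in `H_{α,k}` those alcoves (and the faces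
in between) whose indices belong to `L`.  (Since the bounding faces of a protrusion or
indentation lie in `H`, they are fixed pointwise by the reflection, so this uniform
description agrees with the usual one.) -/
def flipGallery (α : V n) (k : ℝ) (L : Set ℕ) (γ : PreGallery n) : PreGallery n :=
  ⟨γ.len,
   fun i => if i ∈ L then sRefl α k '' γ.p i else γ.p i,
   fun i => if i ∈ L then sRefl α k '' γ.c i else γ.c i⟩

/-- `P` is the index set of a single `H`-protrusion. -/
def IsFlipProtrusion (D : RootData n) (γ : PreGallery n) (α : V n) (k : ℝ) (P : Set ℕ) :
    Prop :=
  (∃ j m, IsProtrusionFin D γ α k j m ∧ P = Set.Ico j m) ∨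
  (∃ j, IsProtrusionInf D γ α k j ∧ P = Set.Ici j)

/-- `P` is the index set of a single `H`-indentation. -/
def IsFlipIndentation (D : RootData n) (γ : PreGallery n) (α : V n) (k : ℝ) (P : Set ℕ) :
    Prop :=
  (∃ j m, IsIndentationFin D γ α k j m ∧ P = Set.Ico j m) ∨
  (∃ j, IsIndentationInf D γ α k j ∧ P = Set.Ici j)

/-- `L` is an `H`-outcrop: a disjoint union of `H`-protrusions. -/
def IsOutcrop (D : RootData n) (γ : PreGallery n) (α : V n) (k : ℝ) (L : Set ℕ) : Prop :=
  ∃ C : Set (Set ℕ), (∀ P ∈ C, IsFlipProtrusion D γ α k P) ∧ C.Pairwise Disjoint ∧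
    L = ⋃₀ C

/-- `L` is an `H`-ingrowth: a disjoint union of `H`-indentations. -/
def IsIngrowth (D : RootData n) (γ : PreGallery n) (α : V n) (k : ℝ) (L : Set ℕ) : Prop :=
  ∃ C : Set (Set ℕ), (∀ P ∈ C, IsFlipIndentation D γ α k P) ∧ C.Pairwise Disjoint ∧
    L = ⋃₀ C

/-- The dominant Weyl chamber `C_f`. -/
def Cf (D : RootData n) : Set (V n) := {v | ∀ α ∈ D.pos, 0 ≤ ⟪α, v⟫}

/-- The closed half-space `α^{k,w}` bounded by `H_{α,k}` which contains a subsector of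
the Weyl chamber `w·C_f`. -/
def halfFor (D : RootData n) (α : V n) (k : ℝ) (w : Equiv.Perm (V n)) : Set (V n) :=
  if ∀ v ∈ Cf D, 0 ≤ ⟪α, w v⟫ then Hge α k else Hle α k

/-- The sub-root system `Φ_J` spanned by the simple roots indexed by `J`. -/
def PhiJ (D : RootData n) (J : Set (Fin n)) : Set (V n) :=
  {α | α ∈ D.Φ ∧ α ∈ Submodule.span ℝ (D.simple '' J)}

/-- The positive roots `Φ_J⁺` of the sub-root system `Φ_J`. -/
def PhiJpos (D : RootData n) (J : Set (Fin n)) : Set (V n) := D.pos ∩ PhiJ D J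

/-- `w0` is the longest element of the finite Weyl group: it maps the dominant Weyl chamber
to the antidominant one. -/
def IsLongest (D : RootData n) (w0 : Equiv.Perm (V n)) : Prop :=
  w0 ∈ FinW D ∧ ⇑w0 '' Cf D = {v | -v ∈ Cf D}

/-- The `J`-chimney `ξ_J`, a collection of closed half-spaces. -/
def chimney (D : RootData n) (J : Set (Fin n)) (w0 : Equiv.Perm (V n)) : Set (Set (V n)) :=
  {h | ∃ α ∈ PhiJpos D J, ∃ k : ℤ, k ≤ 0 ∧ h = halfFor D α (k : ℝ) 1} ∪
  {h | ∃ α ∈ PhiJpos D J, ∃ k : ℤ, 1 ≤ k ∧ h = halfFor D α (k : ℝ) w0} ∪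
  {h | ∃ β ∈ D.pos \ PhiJpos D J, ∃ k : ℤ, h = halfFor D β (k : ℝ) w0}

/-- The `(J,y)`-chimney `ξ_{J,y} = y · ξ_J`. -/
def chimneyY (D : RootData n) (J : Set (Fin n)) (w0 : Equiv.Perm (V n)) (y : AffW D) :
    Set (Set (V n)) :=
  {h | ∃ h' ∈ chimney D J w0, h = actW y h'}

/-- The orientation `φ_{J,y}` induced by the `(J,y)`-chimney: `φ(c,p) = +` iff the closed
half-space bounded by the supporting hyperplane of `p` which contains `c` is not an
element of `ξ_{J,y}`. -/
def chimneyOrient (D : RootData n) (J : Set (Fin n)) (w0 : Equiv.Perm (V n)) (y : AffW D) :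
    Set (V n) → Set (V n) → Prop :=
  fun c p => ∀ α ∈ D.Φ, ∀ k : ℤ, p ⊆ Hy α (k : ℝ) →
    ¬ ((c ⊆ Hge α (k : ℝ) ∧ Hge α (k : ℝ) ∈ chimneyY D J w0 y) ∨
       (c ⊆ Hle α (k : ℝ) ∧ Hle α (k : ℝ) ∈ chimneyY D J w0 y))

/-- The `J`-sector determined by integers `n_β`, `β ∈ Φ⁺ ∖ Φ_J⁺`. -/
def sectorJ (D : RootData n) (J : Set (Fin n)) (w0 : Equiv.Perm (V n)) (nb : V n → ℤ) :
    Set (V n) :=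
  (⋂ α ∈ PhiJpos D J, halfFor D α 0 1 ∩ halfFor D α 1 w0) ∩
  ⋂ β ∈ D.pos \ PhiJpos D J, halfFor D β (nb β : ℝ) w0

/-- The `(J,y)`-sector `y · S_J({n_β})`. -/
def sectorJY (D : RootData n) (J : Set (Fin n)) (w0 : Equiv.Perm (V n)) (y : AffW D)
    (nb : V n → ℤ) : Set (V n) :=
  actW y (sectorJ D J w0 nb)

/-- The data of an infinite combinatorial gallery `(p₀, c₀, p₁, c₁, …)`. -/
structure InfPreGallery (n : ℕ) where
  p : ℕ → Set (V n)
  c : ℕ → Set (V n)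

/-- The gallery conditions for an infinite combinatorial gallery. -/
def IsInfGallery (D : RootData n) (Γ : InfPreGallery n) : Prop :=
  (∀ i, IsAlcove D (Γ.c i)) ∧ IsFace D (Γ.p 0) ∧ Γ.p 0 ⊆ Γ.c 0 ∧
    ∀ i, 1 ≤ i → IsPanelOf D (Γ.p i) (Γ.c (i - 1)) ∧ IsPanelOf D (Γ.p i) (Γ.c i)

/-- The initial finite subgallery `(p₀, c₀, …, p_{m+1})` of an infinite gallery. -/
def truncGallery (Γ : InfPreGallery n) (m : ℕ) : PreGallery n := ⟨m, Γ.p, Γ.c⟩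

/-- An infinite gallery is minimal if every initial finite subgallery is minimal. -/
def InfMinimal (D : RootData n) (Γ : InfPreGallery n) : Prop :=
  ∀ m : ℕ, IsMinimal D (truncGallery Γ m)

/-- Regularity of a (minimal infinite) gallery with respect to the `(J,y)`-sector, where
`y = t^μ u`. -/
def RegularWrt (D : RootData n) (J : Set (Fin n)) (w0 u : Equiv.Perm (V n)) (μ : V n)
    (nb : V n → ℤ) (Γ : InfPreGallery n) : Prop :=
  ∀ β ∈ D.pos \ PhiJpos D J, ∀ k : ℤ,
    halfFor D (u β) (k : ℝ) (u * w0) ⊆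
      halfFor D (u β) ((nb β : ℝ) + ⟪u β, μ⟫) (u * w0) →
    ∃ i, Γ.c i ⊆ halfFor D (u β) (k : ℝ) (u * w0)

/-- The panel of the fundamental alcove fixed by the generator `s ∈ S` (determining the
type of a panel). -/
def fixedPanelType {D : RootData n} (s : AffW D) : Set (V n) :=
  fund D ∩ {v | (s : Equiv.Perm (V n)) v = v}

/-- `γ` has type `(type(σ0), s_{j₁}, …, s_{j_l}, type(τ))` where the `s_{jᵢ}` are the
entries of the word `l`. -/
def HasWordType (D : RootData n) (γ : PreGallery n) (σ0 : Set (V n)) (l : List (AffW D))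
    (τ : Set (V n)) : Prop :=
  γ.len = l.length ∧ SameTypeFace D σ0 (γ.p 0) ∧ SameTypeFace D τ (γ.p (γ.len + 1)) ∧
    ∀ i, ∀ h : i < l.length, SameTypeFace D (fixedPanelType (l.get ⟨i, h⟩)) (γ.p (i + 1))

/-- `l` is a reduced word for `w ∈ W`. -/
def IsReducedWord (D : RootData n) (l : List (AffW D)) (w : AffW D) : Prop :=
  (∀ s ∈ l, s ∈ SGen D) ∧ l.prod = w ∧ l.length = lenW D w

end

/-!
Elements of `W` are homeomorphisms permuting the walls, so they permute alcoves and it suffices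
to treat `y = 1`. For `β ∈ Φ⁺` the sector `S_J` reads `0 ≤ ⟨β, ·⟩ ≤ 1` if `β ∈ Φ_J`, and
`⟨β, ·⟩ ≤ n_β` otherwise. Let `ρ_J` be the sum of the fundamental coweights `ωⱼ^∨`, `j ∉ J`: it
is orthogonal to `Φ_J` and `⟨β, ρ_J⟩ > 0` for `β ∈ Φ⁺ ∖ Φ_J⁺`. Starting from a point of the open
fundamental alcove and moving far along `-ρ_J` (avoiding the countably many parameters that
land on a wall) we reach points whose alcoves lie in `S_J`. If `J ≠ {1,…,n}`, a simple root
`αⱼ` with `j ∉ J` decreases at unit speed along this ray, so we obtain infinitely many distinct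
alcoves. If `J = {1,…,n}`, every alcove in `S_J` meets the open fundamental alcove, which is
convex and avoids the walls, so there is only one.
-/

section Reflection

variable {n : ℕ}

lemma inner_sRefl (α : V n) (k : ℝ) (β v : V n) :
    ⟪β, sRefl α k v⟫ = ⟪β, v⟫ - (⟪α, v⟫ - k) * (2 / ⟪α, α⟫ * ⟪β, α⟫) := by
  rw [sRefl, coroot, inner_sub_right, real_inner_smul_right, real_inner_smul_right]

lemma sRefl_sRefl {α : V n} (hα : ⟪α, α⟫ ≠ 0) (k : ℝ) (v : V n) :
    sRefl α k (sRefl α k v) = v := by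
  have h : ⟪α, sRefl α k v⟫ = 2 * k - ⟪α, v⟫ := by
    rw [inner_sRefl, div_mul_cancel₀ 2 hα]
    ring
  simp only [sRefl] at h ⊢
  rw [h]
  module

lemma continuous_sRefl (α : V n) (k : ℝ) : Continuous (sRefl α k) := by
  unfold sRefl
  fun_prop

noncomputable def reflHomeomorph {α : V n} (hα : ⟪α, α⟫ ≠ 0) (k : ℝ) : V n ≃ₜ V n where
  toFun := sRefl α k
  invFun := sRefl α k
  left_inv := sRefl_sRefl hα k
  right_inv := sRefl_sRefl hα k
  continuous_toFun := continuous_sRefl α k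
  continuous_invFun := continuous_sRefl α k

end Reflection

lemma IsPreconnected.subset_Ioo_floor {S : Set ℝ} (hS : IsPreconnected S) {a : ℝ} (ha : a ∈ S)
    (hZ : ∀ m : ℤ, (m : ℝ) ∉ S) : S ⊆ Set.Ioo (⌊a⌋ : ℝ) (⌊a⌋ + 1) := by
  intro x hx
  have hfl : (⌊a⌋ : ℝ) < a := (Int.floor_le a).lt_of_ne fun h => hZ _ (h ▸ ha)
  by_contra hxI
  rw [Set.mem_Ioo, not_and_or, not_lt, not_lt] at hxI
  rcases hxI with h | h
  · exact hZ ⌊a⌋ (hS.Icc_subset hx ha ⟨h, hfl.le⟩)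
  · exact hZ (⌊a⌋ + 1) (by push_cast; exact hS.Icc_subset ha hx ⟨(Int.lt_floor_add_one a).le, h⟩)

namespace RootData

open Filter Topology

variable {n : ℕ} (D : RootData n)

lemma inner_self_ne_zero {α : V n} (hα : α ∈ D.Φ) : ⟪α, α⟫ ≠ 0 :=
  _root_.inner_self_ne_zero.mpr (D.nonzero α hα)

lemma mem_wallUnion_iff {v : V n} : v ∈ wallUnion D ↔ ∃ α ∈ D.Φ, ∃ m : ℤ, ⟪α, v⟫ = m := by
  simp [wallUnion, Hy]

lemma inner_ne_intCast_of_notMem_wallUnion {v : V n} (hv : v ∉ wallUnion D) {α : V n}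
    (hα : α ∈ D.Φ) (m : ℤ) : ⟪α, v⟫ ≠ m :=
  fun h => hv (D.mem_wallUnion_iff.mpr ⟨α, hα, m, h⟩)

/- `s_{α,k}` maps `H_{β,m}` onto `H_{s_α β, m - ⟨β, α^∨⟩ k}`. -/
lemma sRefl_mem_wallUnion {α : V n} (hα : α ∈ D.Φ) (k : ℤ) {v : V n}
    (hv : v ∈ wallUnion D) : sRefl α k v ∈ wallUnion D := by
  rw [D.mem_wallUnion_iff] at hv ⊢
  obtain ⟨β, hβ, m, hm⟩ := hv
  obtain ⟨t, ht⟩ := D.crystallographic α hα β hβ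
  have hαα := D.inner_self_ne_zero hα
  refine ⟨β - (2 * ⟪α, β⟫ / ⟪α, α⟫) • α, D.reflect_mem α hα β hβ, m - t * k, ?_⟩
  have hcartan : 2 / ⟪α, α⟫ * ⟪β, α⟫ = t := by rw [← ht, real_inner_comm β α]; ring
  have hαα' : 2 / ⟪α, α⟫ * ⟪α, α⟫ = 2 := div_mul_cancel₀ 2 hαα
  rw [inner_sub_left, real_inner_smul_left, inner_sRefl, inner_sRefl, hm, hcartan, hαα', ht]
  push_cast
  ring

lemma exists_homeomorph_of_mem_affW {g : Equiv.Perm (V n)} (hg : g ∈ AffW D) :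
    ∃ e : V n ≃ₜ V n, ⇑e = ⇑g ∧ e '' wallUnion D = wallUnion D := by
  induction hg using Subgroup.closure_induction with
  | mem g hg =>
    obtain ⟨α, hα, k, hgk⟩ := hg
    set e := reflHomeomorph (D.inner_self_ne_zero hα) k
    have hsub : ∀ v ∈ wallUnion D, e v ∈ wallUnion D := fun v hv => D.sRefl_mem_wallUnion hα k hv
    refine ⟨e, hgk.symm, Set.Subset.antisymm (Set.image_subset_iff.mpr hsub) fun v hv => ?_⟩
    exact ⟨e v, hsub v hv, sRefl_sRefl (D.inner_self_ne_zero hα) k v⟩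
  | one => exact ⟨Homeomorph.refl _, rfl, Set.image_id _⟩
  | mul g h _ _ ihg ihh =>
    obtain ⟨e, he, heW⟩ := ihg
    obtain ⟨f, hf, hfW⟩ := ihh
    have hcomp : ⇑(f.trans e) = ⇑e ∘ ⇑f := rfl
    refine ⟨f.trans e, by rw [hcomp, he, hf]; rfl, ?_⟩
    rw [hcomp, Set.image_comp, hfW, heW]
  | inv g _ ih =>
    obtain ⟨e, he, heW⟩ := ih
    refine ⟨e.symm, ?_, ?_⟩
    · rw [show ⇑e.symm = ⇑e.toEquiv.symm from rfl, Equiv.coe_fn_injective he]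
      rfl
    · nth_rewrite 1 [← heW]
      exact e.symm_image_image _

lemma _root_.IsAlcove.image {D : RootData n} {g : Equiv.Perm (V n)} (hg : g ∈ AffW D)
    {c : Set (V n)} (hc : IsAlcove D c) : IsAlcove D (⇑g '' c) := by
  obtain ⟨e, he, heW⟩ := D.exists_homeomorph_of_mem_affW hg
  obtain ⟨v, hv, rfl⟩ := hc
  have heWc : e '' (wallUnion D)ᶜ = (wallUnion D)ᶜ := by
    rw [Set.image_compl_eq e.bijective, heW]
  refine ⟨e v, heWc ▸ Set.mem_image_of_mem e hv, ?_⟩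
  rw [← he, e.image_closure, e.image_connectedComponentIn hv, heWc]

/-- The alcove containing `u`; it is empty when `u` lies on a wall. -/
def alcoveOf (u : V n) : Set (V n) := closure (connectedComponentIn (wallUnion D)ᶜ u)

lemma isAlcove_alcoveOf {u : V n} (hu : u ∉ wallUnion D) : IsAlcove D (D.alcoveOf u) :=
  ⟨u, hu, rfl⟩

lemma mem_alcoveOf {u : V n} (hu : u ∉ wallUnion D) : u ∈ D.alcoveOf u :=
  subset_closure (mem_connectedComponentIn hu)

def alcovesIn (S : Set (V n)) : Set (Set (V n)) := {c | IsAlcove D c ∧ c ⊆ S}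

lemma alcovesIn_image {g : Equiv.Perm (V n)} (hg : g ∈ AffW D) (S : Set (V n)) :
    D.alcovesIn (g '' S) = Set.image g '' D.alcovesIn S := by
  ext c
  constructor
  · rintro ⟨hc, hcS⟩
    refine ⟨g.symm '' c, ⟨hc.image (inv_mem hg), ?_⟩, g.image_symm_image c⟩
    rw [← g.symm_image_image S]
    exact Set.image_mono hcS
  · rintro ⟨c, ⟨hc, hcS⟩, rfl⟩
    exact ⟨hc.image hg, Set.image_mono hcS⟩

variable {D}

lemma inner_mem_Icc_of_mem_alcoveOf {u v : V n} (hu : u ∉ wallUnion D) {α : V n}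
    (hα : α ∈ D.Φ) (hv : v ∈ D.alcoveOf u) :
    ⟪α, v⟫ ∈ Set.Icc (⌊⟪α, u⟫⌋ : ℝ) (⌊⟪α, u⟫⌋ + 1) := by
  have hcont : Continuous fun w : V n => ⟪α, w⟫ := by fun_prop
  have hcc : connectedComponentIn (wallUnion D)ᶜ u ⊆
      (fun w => ⟪α, w⟫) ⁻¹' Set.Ioo (⌊⟪α, u⟫⌋ : ℝ) (⌊⟪α, u⟫⌋ + 1) := by
    rw [← Set.image_subset_iff]
    refine (isPreconnected_connectedComponentIn.image _ hcont.continuousOn).subset_Ioo_floor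
      (Set.mem_image_of_mem _ (mem_connectedComponentIn hu)) ?_
    rintro m ⟨w, hw, hwm⟩
    exact D.inner_ne_intCast_of_notMem_wallUnion (connectedComponentIn_subset _ _ hw) hα m hwm
  exact closure_minimal (hcc.trans (Set.preimage_mono Set.Ioo_subset_Icc_self))
    (isClosed_Icc.preimage hcont) hv

lemma abs_inner_sub_lt_one_of_alcoveOf_eq {u u' : V n} (hu : u ∉ wallUnion D)
    (hu' : u' ∉ wallUnion D) {α : V n} (hα : α ∈ D.Φ) (h : D.alcoveOf u = D.alcoveOf u') :
    |⟪α, u⟫ - ⟪α, u'⟫| < 1 := by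
  obtain ⟨h₁, h₂⟩ := inner_mem_Icc_of_mem_alcoveOf hu hα (h ▸ D.mem_alcoveOf hu')
  have hne := D.inner_ne_intCast_of_notMem_wallUnion hu' hα
  have h₁' := lt_of_le_of_ne h₁ (hne _).symm
  have h₂' : ⟪α, u'⟫ < ⌊⟪α, u⟫⌋ + 1 := lt_of_le_of_ne h₂ (by exact_mod_cast hne (⌊⟪α, u⟫⌋ + 1))
  rw [abs_sub_lt_iff]
  constructor <;> linarith [Int.floor_le ⟪α, u⟫, Int.lt_floor_add_one ⟪α, u⟫]

lemma alcoveOf_eq_of_isPreconnected {S : Set (V n)} (hS : IsPreconnected S)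
    (hSW : S ⊆ (wallUnion D)ᶜ) {u v : V n} (hu : u ∈ S) (hv : v ∈ S) :
    D.alcoveOf u = D.alcoveOf v := by
  rw [alcoveOf, alcoveOf, connectedComponentIn_eq (hS.subset_connectedComponentIn hu hSW hv)]

variable (D)

noncomputable def simpleBasis : Module.Basis (Fin n) ℝ (V n) :=
  basisOfLinearIndependentOfCardEqFinrank' D.simple D.simple_indep (by simp)

@[simp]
lemma coe_simpleBasis : ⇑D.simpleBasis = D.simple :=
  coe_basisOfLinearIndependentOfCardEqFinrank' ..

/-- The sum of the fundamental coweights `ωⱼ^∨` over `j ∉ J`. -/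
noncomputable def coweight (J : Set (Fin n)) : V n :=
  (InnerProductSpace.toDual ℝ (V n)).symm <| LinearMap.toContinuousLinearMap <|
    ∑ j ∈ Finset.univ.filter (· ∉ J), D.simpleBasis.coord j

lemma PhiJpos_univ : PhiJpos D Set.univ = D.pos := by
  refine Set.inter_eq_left.mpr fun α hα => ⟨D.pos_sub hα, ?_⟩
  rw [Set.image_univ, ← D.coe_simpleBasis, D.simpleBasis.span_eq]
  trivial

variable {D}

lemma inner_coweight (J : Set (Fin n)) (β : V n) :
    ⟪β, D.coweight J⟫ = ∑ j ∈ Finset.univ.filter (· ∉ J), D.simpleBasis.repr β j := by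
  rw [real_inner_comm, coweight, InnerProductSpace.toDual_symm_apply,
    LinearMap.coe_toContinuousLinearMap', LinearMap.sum_apply]
  rfl

lemma simpleBasis_repr_nonneg {β : V n} (hβ : β ∈ D.pos) (i : Fin n) :
    0 ≤ D.simpleBasis.repr β i := by
  obtain ⟨c, hc, rfl⟩ := D.pos_combo β hβ
  rw [← D.coe_simpleBasis, Module.Basis.repr_sum_self]
  exact hc i

lemma inner_coweight_eq_zero {J : Set (Fin n)} {β : V n}
    (hβ : β ∈ Submodule.span ℝ (D.simple '' J)) : ⟪β, D.coweight J⟫ = 0 := by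
  rw [← D.coe_simpleBasis, Module.Basis.mem_span_image] at hβ
  rw [inner_coweight]
  exact Finset.sum_eq_zero fun j hj =>
    Finsupp.notMem_support_iff.mp fun h => (Finset.mem_filter.mp hj).2 (hβ h)

lemma inner_coweight_pos {J : Set (Fin n)} {β : V n} (hβ : β ∈ D.pos \ PhiJpos D J) :
    0 < ⟪β, D.coweight J⟫ := by
  have hnonneg := fun j (_ : j ∈ Finset.univ.filter (· ∉ J)) => simpleBasis_repr_nonneg hβ.1 j
  rw [inner_coweight]
  refine (Finset.sum_nonneg hnonneg).lt_of_ne fun h => hβ.2 ⟨hβ.1, D.pos_sub hβ.1, ?_⟩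
  rw [← D.coe_simpleBasis, Module.Basis.mem_span_image]
  intro j hj
  by_contra hjJ
  exact Finsupp.mem_support_iff.mp hj
    ((Finset.sum_eq_zero_iff_of_nonneg hnonneg).mp h.symm j (by simpa using hjJ))

lemma inner_simple_coweight {J : Set (Fin n)} {j : Fin n} (hj : j ∉ J) :
    ⟪D.simple j, D.coweight J⟫ = 1 := by
  rw [inner_coweight, ← D.coe_simpleBasis, Module.Basis.repr_self]
  simp [Finsupp.single_apply, hj]

lemma inner_coweight_empty_pos {β : V n} (hβ : β ∈ D.pos) : 0 < ⟪β, D.coweight ∅⟫ := by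
  refine inner_coweight_pos ⟨hβ, fun hJ => D.nonzero β hJ.2.1 ?_⟩
  simpa using hJ.2.2

lemma halfFor_one {α : V n} (hα : α ∈ D.pos) (k : ℝ) : halfFor D α k 1 = Hge α k :=
  if_pos fun _ hv => hv α hα

lemma halfFor_of_isLongest {w0 : Equiv.Perm (V n)} (hw0 : IsLongest D w0) {β : V n}
    (hβ : β ∈ D.pos) (k : ℝ) : halfFor D β k w0 = Hle β k := by
  refine if_neg fun h => ?_
  obtain ⟨v, hv, hvρ⟩ : -D.coweight ∅ ∈ w0 '' Cf D := by
    rw [hw0.2]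
    simpa using show D.coweight ∅ ∈ Cf D from fun α hα => (inner_coweight_empty_pos hα).le
  have := h v hv
  rw [hvρ, inner_neg_right] at this
  linarith [inner_coweight_empty_pos hβ]

lemma mem_sectorJ_iff {w0 : Equiv.Perm (V n)} (hw0 : IsLongest D w0) {J : Set (Fin n)}
    {nb : V n → ℤ} {v : V n} :
    v ∈ sectorJ D J w0 nb ↔ (∀ α ∈ PhiJpos D J, 0 ≤ ⟪α, v⟫ ∧ ⟪α, v⟫ ≤ 1) ∧
      ∀ β ∈ D.pos \ PhiJpos D J, ⟪β, v⟫ ≤ nb β := by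
  simp only [sectorJ, Set.mem_inter_iff, Set.mem_iInter]
  refine and_congr (forall₂_congr fun α hα => ?_) (forall₂_congr fun β hβ => ?_)
  · rw [halfFor_one hα.1, halfFor_of_isLongest hw0 hα.1]
    rfl
  · rw [halfFor_of_isLongest hw0 hβ.1]
    rfl

lemma alcoveOf_subset_sectorJ {w0 : Equiv.Perm (V n)} (hw0 : IsLongest D w0)
    {J : Set (Fin n)} {nb : V n → ℤ} {u : V n} (hu : u ∉ wallUnion D)
    (hJ : ∀ α ∈ PhiJpos D J, ⟪α, u⟫ ∈ Set.Ioo 0 1)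
    (hB : ∀ β ∈ D.pos \ PhiJpos D J, ⟪β, u⟫ < nb β) :
    D.alcoveOf u ⊆ sectorJ D J w0 nb := by
  intro v hv
  refine (mem_sectorJ_iff hw0).mpr ⟨fun α hα => ?_, fun β hβ => ?_⟩
  · have h := inner_mem_Icc_of_mem_alcoveOf hu (D.pos_sub hα.1) hv
    rwa [Int.floor_eq_zero_iff.mpr (Set.Ioo_subset_Ico_self (hJ α hα)), Int.cast_zero,
      zero_add] at h
  · have hfl : ⌊⟪β, u⟫⌋ + 1 ≤ nb β := Int.floor_lt.mpr (hB β hβ)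
    calc ⟪β, v⟫ ≤ ⌊⟪β, u⟫⌋ + 1 := (inner_mem_Icc_of_mem_alcoveOf hu (D.pos_sub hβ.1) hv).2
      _ ≤ nb β := by exact_mod_cast hfl

variable (D)

/-- The interior of the fundamental alcove, cut out by all positive roots. -/
def fundInterior : Set (V n) := {x | ∀ α ∈ D.pos, ⟪α, x⟫ ∈ Set.Ioo 0 1}

lemma convex_fundInterior : Convex ℝ D.fundInterior := by
  intro x hx y hy a b ha hb hab α hα
  rw [inner_add_right, real_inner_smul_right, real_inner_smul_right]
  exact convex_Ioo 0 1 (hx α hα) (hy α hα) ha hb hab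

lemma fundInterior_subset_compl_wallUnion : D.fundInterior ⊆ (wallUnion D)ᶜ := by
  intro x hx hW
  obtain ⟨α, hα, m, hm⟩ := D.mem_wallUnion_iff.mp hW
  rcases D.pos_total α hα with hp | hp
  · obtain ⟨h0, h1⟩ := hx α hp
    rw [hm] at h0 h1
    norm_cast at h0 h1
    omega
  · obtain ⟨h0, h1⟩ := hx (-α) hp
    rw [inner_neg_left, hm] at h0 h1
    norm_cast at h0 h1
    omega

lemma fundInterior_nonempty : D.fundInterior.Nonempty := by
  have hfin : D.pos.Finite := D.finite.subset D.pos_sub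
  have hsmall : ∀ᶠ ε in 𝓝[>] (0 : ℝ), 0 < ε ∧ ∀ α ∈ D.pos, ε * ⟪α, D.coweight ∅⟫ < 1 :=
    (eventually_mem_nhdsWithin (a := 0) (s := Set.Ioi 0)).and <|
      (eventually_all_finite hfin).mpr fun α _ =>
        (((continuous_mul_const _).tendsto' 0 0 (zero_mul _)).mono_left
          nhdsWithin_le_nhds).eventually_lt_const zero_lt_one
  obtain ⟨ε, hε, hε1⟩ := hsmall.exists
  refine ⟨ε • D.coweight ∅, fun α hα => ?_⟩
  rw [real_inner_smul_right]
  exact ⟨mul_pos hε (inner_coweight_empty_pos hα), hε1 α hα⟩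

lemma exists_mem_Ioo_sub_smul_notMem_wallUnion {x : V n} (hx : x ∉ wallUnion D) (c : V n)
    {a b : ℝ} (hab : a < b) : ∃ s ∈ Set.Ioo a b, x - s • c ∉ wallUnion D := by
  have hbad : {s : ℝ | x - s • c ∈ wallUnion D} =
      ⋃ α ∈ D.Φ, ⋃ m : ℤ, {s : ℝ | ⟪α, x⟫ - s * ⟪α, c⟫ = m} := by
    ext s
    simp [D.mem_wallUnion_iff, inner_sub_right, real_inner_smul_right]
  have hcount : {s : ℝ | x - s • c ∈ wallUnion D}.Countable := by
    rw [hbad]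
    refine D.finite.countable.biUnion fun α hα => Set.countable_iUnion fun m =>
      Set.Subsingleton.countable fun s (hs : _ = _) t (ht : _ = _) => ?_
    have hαc : ⟪α, c⟫ ≠ 0 := fun h0 =>
      D.inner_ne_intCast_of_notMem_wallUnion hx hα m (by simpa [h0] using hs)
    exact mul_right_cancel₀ hαc (by linarith)
  obtain ⟨s, hs, hsW⟩ :=
    (hcount.dense_compl ℝ).inter_open_nonempty _ isOpen_Ioo (Set.nonempty_Ioo.mpr hab)
  exact ⟨s, hs, hsW⟩

variable {D}

lemma exists_seq_alcoveOf_subset_sectorJ {w0 : Equiv.Perm (V n)} (hw0 : IsLongest D w0)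
    (J : Set (Fin n)) (nb : V n → ℤ) :
    ∃ u : ℕ → V n, (∀ k, u k ∉ wallUnion D ∧ D.alcoveOf (u k) ⊆ sectorJ D J w0 nb) ∧
      (J ≠ Set.univ → Function.Injective (D.alcoveOf ∘ u)) := by
  obtain ⟨x₀, hx₀⟩ := D.fundInterior_nonempty
  set c := D.coweight J
  have hBfin : (D.pos \ PhiJpos D J).Finite := (D.finite.subset D.pos_sub).sdiff
  obtain ⟨S, hS⟩ := eventually_atTop.mp <| (eventually_all_finite hBfin).mpr fun β hβ =>
    (eventually_gt_atTop ((⟪β, x₀⟫ - nb β) / ⟪β, c⟫)).mono fun s hs => by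
      rw [div_lt_iff₀ (inner_coweight_pos hβ)] at hs
      show ⟪β, x₀⟫ - s * ⟪β, c⟫ < nb β
      linarith
  have hgen : ∀ k : ℕ, ∃ s ∈ Set.Ioo (S + 2 * k) (S + 2 * k + 1), x₀ - s • c ∉ wallUnion D :=
    fun k => D.exists_mem_Ioo_sub_smul_notMem_wallUnion
      (D.fundInterior_subset_compl_wallUnion hx₀) c (by linarith)
  choose s hs hsW using hgen
  have hinner : ∀ k β, ⟪β, x₀ - s k • c⟫ = ⟪β, x₀⟫ - s k * ⟪β, c⟫ := fun k β => by
    rw [inner_sub_right, real_inner_smul_right]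
  refine ⟨fun k => x₀ - s k • c, fun k => ⟨hsW k, alcoveOf_subset_sectorJ hw0 (hsW k)
    (fun α hα => ?_) (fun β hβ => ?_)⟩, fun hJ k l hkl => ?_⟩
  · rw [hinner, inner_coweight_eq_zero hα.2.2, mul_zero, sub_zero]
    exact hx₀ α hα.1
  · rw [hinner]
    exact hS (s k) (by linarith [(hs k).1, k.cast_nonneg (α := ℝ)]) β hβ
  · -- distinct `k, l` have parameters `s k, s l` more than `1` apart
    obtain ⟨j, hj⟩ := (Set.ne_univ_iff_exists_notMem J).mp hJ
    have h := abs_inner_sub_lt_one_of_alcoveOf_eq (hsW k) (hsW l)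
      (D.pos_sub (D.simple_mem j)) hkl
    rw [hinner, hinner, inner_simple_coweight hj, abs_sub_lt_iff] at h
    obtain ⟨hk₁, hk₂⟩ := hs k
    obtain ⟨hl₁, hl₂⟩ := hs l
    have hkl : (k : ℝ) < l + 1 := by linarith [h.1]
    have hlk : (l : ℝ) < k + 1 := by linarith [h.2]
    norm_cast at hkl hlk
    omega

lemma alcovesIn_sectorJ_nonempty {w0 : Equiv.Perm (V n)} (hw0 : IsLongest D w0)
    (J : Set (Fin n)) (nb : V n → ℤ) : (D.alcovesIn (sectorJ D J w0 nb)).Nonempty := by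
  obtain ⟨u, hu, -⟩ := exists_seq_alcoveOf_subset_sectorJ hw0 J nb
  exact ⟨_, D.isAlcove_alcoveOf (hu 0).1, (hu 0).2⟩

lemma alcovesIn_sectorJ_infinite {w0 : Equiv.Perm (V n)} (hw0 : IsLongest D w0)
    {J : Set (Fin n)} (hJ : J ≠ Set.univ) (nb : V n → ℤ) :
    (D.alcovesIn (sectorJ D J w0 nb)).Infinite := by
  obtain ⟨u, hu, hinj⟩ := exists_seq_alcoveOf_subset_sectorJ hw0 J nb
  exact Set.infinite_of_injective_forall_mem (hinj hJ)
    fun k => ⟨D.isAlcove_alcoveOf (hu k).1, (hu k).2⟩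

lemma alcovesIn_sectorJ_univ_subsingleton {w0 : Equiv.Perm (V n)} (hw0 : IsLongest D w0)
    (nb : V n → ℤ) : (D.alcovesIn (sectorJ D Set.univ w0 nb)).Subsingleton := by
  have hfund : ∀ u ∉ wallUnion D, D.alcoveOf u ⊆ sectorJ D Set.univ w0 nb →
      u ∈ D.fundInterior := fun u hu hus α hα => by
    have h := ((mem_sectorJ_iff hw0).mp (hus (D.mem_alcoveOf hu))).1 α (by rwa [PhiJpos_univ])
    have hne := D.inner_ne_intCast_of_notMem_wallUnion hu (D.pos_sub hα)
    exact ⟨h.1.lt_of_ne (by exact_mod_cast (hne 0).symm), h.2.lt_of_ne (by exact_mod_cast hne 1)⟩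
  rintro _ ⟨⟨u, hu, rfl⟩, hus⟩ _ ⟨⟨v, hv, rfl⟩, hvs⟩
  exact alcoveOf_eq_of_isPreconnected D.convex_fundInterior.isPreconnected
    D.fundInterior_subset_compl_wallUnion (hfund u hu hus) (hfund v hv hvs)

end RootData

/-- Lemma: every `(J,y)`-sector contains at least one alcove, and if it
contains more than one then it contains infinitely many. -/
theorem sector_alcoves {n : ℕ} (D : RootData n)
    (J : Set (Fin n)) (y : AffW D) (w0 : Equiv.Perm (V n)) (hw0 : IsLongest D w0)
    (nb : V n → ℤ) :
    (∃ c, IsAlcove D c ∧ c ⊆ sectorJY D J w0 y nb) ∧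
    ((∃ c c', IsAlcove D c ∧ IsAlcove D c' ∧ c ⊆ sectorJY D J w0 y nb ∧
        c' ⊆ sectorJY D J w0 y nb ∧ c ≠ c') →
      {c : Set (V n) | IsAlcove D c ∧ c ⊆ sectorJY D J w0 y nb}.Infinite) := by
  have hA : D.alcovesIn (sectorJY D J w0 y nb) =
      Set.image (y : Equiv.Perm (V n)) '' D.alcovesIn (sectorJ D J w0 nb) :=
    D.alcovesIn_image y.2 _
  have hinj : Set.InjOn (Set.image (y : Equiv.Perm (V n))) (D.alcovesIn (sectorJ D J w0 nb)) :=
    (Set.image_injective.mpr (Equiv.injective _)).injOn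
  refine ⟨?_, fun ⟨c, c', hc, hc', hcS, hc'S, hne⟩ => ?_⟩
  · obtain ⟨c, hc⟩ := (RootData.alcovesIn_sectorJ_nonempty hw0 J nb).image (Set.image y.1)
    rw [← hA] at hc
    exact ⟨c, hc⟩
  · change (D.alcovesIn _).Infinite
    rw [hA, Set.infinite_image_iff hinj]
    by_cases hJ : J = Set.univ
    · subst hJ
      have hsub := (RootData.alcovesIn_sectorJ_univ_subsingleton hw0 nb).image (Set.image y.1)
      rw [← hA] at hsub
      exact absurd (hsub ⟨hc, hcS⟩ ⟨hc', hc'S⟩) hne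
    · exact RootData.alcovesIn_sectorJ_infinite hw0 hJ nb
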